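/- arXiv:1303.2683 — 7 statements merged into one kernel-verified Lean document; each statement's English description precedes it below -/
import Mathlib

section
/- Let A be a real or complex r×s matrix with r ≤ s and singular values σ₁ ≥ σ₂ ≥ ⋯ ≥ σ_r ≥ 0. Then for every 1 ≤ k ≤ r, the absolute value of any k×k minor of A (the determinant of the submatrix given by any k rows and k columns) is at most σ₁·σ₂⋯σ_k. -/
open Matrix
open Finset

instance decStrictMono {k n : ℕ} : DecidablePred (StrictMono : (Fin k → Fin n) → Prop) :=
  fun f => decidable_of_iff (∀ a b : Fin k, a < b → f a < f b) Iff.rfl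

theorem cauchyBinet {R : Type*} [CommRing R] {k n : ℕ}
    (M : Matrix (Fin k) (Fin n) R) (N : Matrix (Fin n) (Fin k) R) :
    (M * N).det = ∑ f : {f : Fin k → Fin n // StrictMono f},
      (M.submatrix id f.1).det * (N.submatrix f.1 id).det := by
  classical
  have h1 : (M * N) = fun i => ∑ x : Fin n, M i x • N x := by
    funext i j; simp [Matrix.mul_apply, Finset.sum_apply]
  have stepA : (M * N).det =
      ∑ g : Fin k → Fin n, (∏ i, M i (g i)) * (N.submatrix g id).det := by
    calc (M * N).det
        = (Matrix.detRowAlternating (n := Fin k) (R := R)).toMultilinearMap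
            (fun i => ∑ x : Fin n, M i x • N x) := by rw [← h1]; rfl
      _ = ∑ g : Fin k → Fin n, (Matrix.detRowAlternating (n := Fin k)
            (R := R)).toMultilinearMap (fun i => M i (g i) • N (g i)) :=
          MultilinearMap.map_sum _ _
      _ = ∑ g : Fin k → Fin n, (∏ i, M i (g i)) * (N.submatrix g id).det := by
          refine Finset.sum_congr rfl fun g _ => ?_
          rw [MultilinearMap.map_smul_univ, smul_eq_mul]
          rfl
  have stepB : (M * N).det = ∑ g ∈ Finset.univ.filter
      (fun g : Fin k → Fin n => Function.Injective g),
      (∏ i, M i (g i)) * (N.submatrix g id).det := by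
    rw [stepA]
    refine (Finset.sum_filter_of_ne fun g _ hne => ?_).symm
    by_contra hg
    simp only [Function.Injective] at hg
    push_neg at hg
    obtain ⟨a, b, hab, hne'⟩ := hg
    have : (N.submatrix g id).det = 0 :=
      Matrix.det_zero_of_row_eq hne' (by funext j; simp [hab])
    simp [this] at hne
  have stepC : ∑ g ∈ Finset.univ.filter
      (fun g : Fin k → Fin n => Function.Injective g),
      (∏ i, M i (g i)) * (N.submatrix g id).det
      = ∑ p : {f : Fin k → Fin n // StrictMono f} × Equiv.Perm (Fin k),
        (∏ i, M i (p.1.1 (p.2 i))) * (N.submatrix (p.1.1 ∘ p.2) id).det := by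
    refine (Finset.sum_bij (fun p (_ : p ∈ Finset.univ) => p.1.1 ∘ p.2.1)
      (fun p _ => by
        simp only [Finset.mem_filter, Finset.mem_univ, true_and]
        exact p.1.2.injective.comp p.2.injective)
      (fun p₁ _ p₂ _ h => ?_) (fun g hg => ?_) (fun p _ => rfl)).symm
    · have hr : Set.range p₁.1.1 = Set.range p₂.1.1 := by
        rw [← p₁.2.surjective.range_comp p₁.1.1, ← p₂.2.surjective.range_comp p₂.1.1]
        exact congrArg Set.range h
      haveI hwf : WellFoundedLT (Fin k) := inferInstance
      have hf : p₁.1.1 = p₂.1.1 :=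
        (@StrictMono.range_inj (Fin k) (Fin n) _ _ hwf _ _ p₁.1.2 p₂.1.2).mp hr
      have hτ : p₁.2 = p₂.2 := by
        ext i
        have := congrFun h i
        simp only [Function.comp_apply, hf] at this
        exact congrArg Fin.val (p₂.1.2.injective this)
      exact Prod.ext (Subtype.ext hf) hτ
    · simp only [Finset.mem_filter, Finset.mem_univ, true_and] at hg
      set s : Finset (Fin n) := Finset.image g Finset.univ with hs_def
      have hs : s.card = k := by
        rw [hs_def, Finset.card_image_of_injective _ hg, Finset.card_univ, Fintype.card_fin]
      have hmem : ∀ i, g i ∈ s := fun i => Finset.mem_image_of_mem g (Finset.mem_univ i)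
      set τ₀ : Fin k → Fin k := fun i => (s.orderIsoOfFin hs).symm ⟨g i, hmem i⟩ with hτ₀
      have hτinj : Function.Injective τ₀ := by
        intro a b hab
        have h2 : (⟨g a, hmem a⟩ : s) = ⟨g b, hmem b⟩ := by
          have := congrArg (s.orderIsoOfFin hs) hab
          simpa only [hτ₀, OrderIso.apply_symm_apply] using this
        exact hg (congrArg Subtype.val h2)
      refine ⟨⟨⟨fun i => s.orderEmbOfFin hs i, (s.orderEmbOfFin hs).strictMono⟩,
        Equiv.ofBijective τ₀ (Finite.injective_iff_bijective.mp hτinj)⟩,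
        Finset.mem_univ _, ?_⟩
      funext i
      show (s.orderEmbOfFin hs) (τ₀ i) = g i
      rw [← Finset.coe_orderIsoOfFin_apply]
      simp only [hτ₀, OrderIso.apply_symm_apply]
  rw [stepB, stepC, Fintype.sum_prod_type]
  refine Finset.sum_congr rfl fun f _ => ?_
  have key : ∀ τ : Equiv.Perm (Fin k),
      (N.submatrix (f.1 ∘ τ) id).det = (Equiv.Perm.sign τ : ℤ) * (N.submatrix f.1 id).det := by
    intro τ
    have : N.submatrix (f.1 ∘ τ) id = (N.submatrix f.1 id).submatrix τ id := rfl
    rw [this, Matrix.det_permute]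
  calc ∑ τ : Equiv.Perm (Fin k), (∏ i, M i (f.1 (τ i))) * (N.submatrix (f.1 ∘ τ) id).det
      = (∑ τ : Equiv.Perm (Fin k), ((Equiv.Perm.sign τ : ℤ) : R) * ∏ i, M i (f.1 (τ i)))
        * (N.submatrix f.1 id).det := by
        rw [Finset.sum_mul]
        refine Finset.sum_congr rfl fun τ _ => ?_
        rw [key τ]; push_cast; ring
    _ = (M.submatrix id f.1).det * (N.submatrix f.1 id).det := by
        congr 1
        rw [Matrix.det_apply']
        rw [← Equiv.sum_comp (Equiv.inv (Equiv.Perm (Fin k)))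
          (fun τ => ((Equiv.Perm.sign τ : ℤ) : R) * ∏ i, M i (f.1 (τ i)))]
        refine Finset.sum_congr rfl fun τ _ => ?_
        simp only [Equiv.inv_apply, Equiv.Perm.sign_inv]
        congr 1
        rw [← Equiv.prod_comp τ (fun x => M x (f.1 (τ⁻¹ x)))]
        refine Finset.prod_congr rfl fun i _ => ?_
        simp [Matrix.submatrix_apply]

lemma strictMono_fin_le {k r : ℕ} {f : Fin k → Fin r} (hf : StrictMono f) (i : Fin k) :
    (i : ℕ) ≤ (f i : ℕ) := by
  obtain ⟨m, hm⟩ := i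
  induction m with
  | zero => exact Nat.zero_le _
  | succ m ih =>
    have hm' : m < k := Nat.lt_of_succ_lt hm
    have h1 : m ≤ (f ⟨m, hm'⟩ : ℕ) := ih hm'
    have h2 : (f ⟨m, hm'⟩ : ℕ) < (f ⟨m + 1, hm⟩ : ℕ) :=
      Fin.lt_def.mp (hf (by simp [Fin.lt_def]))
    simp only [Fin.val_mk] at h1 ⊢
    omega

lemma prod_inj_le_top {r k : ℕ} (hkr : k ≤ r) (σ : Fin r → ℝ)
    (hmono : Antitone σ) (hpos : ∀ i, 0 ≤ σ i) (g : Fin k → Fin r)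
    (hg : Function.Injective g) :
    ∏ i : Fin k, σ (g i) ≤ ∏ i : Fin k, σ (Fin.castLE hkr i) := by
  set s : Finset (Fin r) := Finset.image g Finset.univ with hs_def
  have hs : s.card = k := by
    rw [hs_def, Finset.card_image_of_injective _ hg, Finset.card_univ, Fintype.card_fin]
  have h1 : ∏ i : Fin k, σ (g i) = ∏ x ∈ s, σ x := by
    rw [hs_def, Finset.prod_image (fun a _ b _ h => hg h)]
  have himg : Finset.image (s.orderEmbOfFin hs) Finset.univ = s := by
    apply Finset.coe_injective
    rw [Finset.coe_image, Finset.coe_univ, Set.image_univ, Finset.range_orderEmbOfFin]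
  have h2 : ∏ x ∈ s, σ x = ∏ i : Fin k, σ (s.orderEmbOfFin hs i) := by
    conv_lhs => rw [← himg]
    rw [Finset.prod_image (fun a _ b _ h => (s.orderEmbOfFin hs).injective h)]
  rw [h1, h2]
  refine Finset.prod_le_prod (fun i _ => hpos _) (fun i _ => ?_)
  refine hmono ?_
  rw [Fin.le_def]
  exact (strictMono_fin_le (s.orderEmbOfFin hs).strictMono i : _)


theorem minor_bound_by_singular_values {𝕜 : Type*} [RCLike 𝕜] {r s k : ℕ}
    (hrs : r ≤ s) (hk1 : 1 ≤ k) (hkr : k ≤ r)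
    (A : Matrix (Fin r) (Fin s) 𝕜) (σ : Fin r → ℝ)
    (hmono : Antitone σ) (hpos : ∀ i, 0 ≤ σ i)
    (hsv : ∃ e : Equiv.Perm (Fin r), ∀ i,
      σ i = Real.sqrt ((Matrix.isHermitian_mul_conjTranspose_self A).eigenvalues (e i)))
    (ri : Fin k → Fin r) (ci : Fin k → Fin s)
    (hri : StrictMono ri) (hci : StrictMono ci) :
    ‖(A.submatrix ri ci).det‖ ≤ ∏ i : Fin k, σ (Fin.castLE hkr i) := by
  classical
  obtain ⟨e, he⟩ := hsv
  set hH := Matrix.isHermitian_mul_conjTranspose_self A with hH_def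
  set lam : Fin r → ℝ := hH.eigenvalues with hlam_def
  have hlam : ∀ j, 0 ≤ lam j := fun j =>
    Matrix.eigenvalues_self_mul_conjTranspose_nonneg A j
  have hσ2 : ∀ i, σ i ^ 2 = lam (e i) := fun i => by
    rw [he i, Real.sq_sqrt (hlam _)]
  set C : Matrix (Fin k) (Fin s) 𝕜 := A.submatrix ri id with hC
  set U : Matrix (Fin r) (Fin r) 𝕜 := (hH.eigenvectorUnitary : Matrix (Fin r) (Fin r) 𝕜)
    with hU
  set D : Matrix (Fin r) (Fin r) 𝕜 := Matrix.diagonal (RCLike.ofReal ∘ lam) with hD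
  set U' : Matrix (Fin k) (Fin r) 𝕜 := U.submatrix ri id with hU'
  set N₀ : Matrix (Fin r) (Fin k) 𝕜 := Uᴴ.submatrix id ri with hN₀
  set Q : ℝ := ∏ i : Fin k, σ (Fin.castLE hkr i) ^ 2 with hQ
  -- Step 0
  have h0 : C * Cᴴ = (A * Aᴴ).submatrix ri ri := by
    ext i j
    simp [Matrix.mul_apply, Matrix.conjTranspose_apply, Matrix.submatrix_apply, hC]
  -- Step I
  set S₁ : ℝ := ∑ f : {f : Fin k → Fin s // StrictMono f},
    ‖(C.submatrix id f.1).det‖ ^ 2 with hS₁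
  have hI : (C * Cᴴ).det = (S₁ : 𝕜) := by
    rw [cauchyBinet, hS₁]
    push_cast
    refine Finset.sum_congr rfl fun f _ => ?_
    have h1 : Cᴴ.submatrix f.1 id = (C.submatrix id f.1)ᴴ := by
      ext i j
      simp [Matrix.conjTranspose_apply, Matrix.submatrix_apply]
    rw [h1, Matrix.det_conjTranspose, RCLike.star_def, RCLike.mul_conj]
    all_goals (push_cast; ring)
  -- Step II: spectral
  have hspec : A * Aᴴ = U * D * Uᴴ := by
    rw [hU, hD]
    simpa [Matrix.star_eq_conjTranspose] using hH.spectral_theorem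
  have hsub2 : (A * Aᴴ).submatrix ri ri = (U' * D) * N₀ := by
    rw [hspec, mul_assoc, Matrix.submatrix_mul U (D * Uᴴ) ri id ri Function.bijective_id,
      Matrix.submatrix_mul D Uᴴ id id ri Function.bijective_id, Matrix.submatrix_id_id,
      Matrix.mul_assoc]
  set W : {f : Fin k → Fin r // StrictMono f} → Matrix (Fin k) (Fin k) 𝕜 :=
    fun f => U'.submatrix id f.1 with hW
  have hcol : ∀ f : {f : Fin k → Fin r // StrictMono f},
      ((U' * D).submatrix id f.1).det
        = (∏ j : Fin k, (lam (f.1 j) : 𝕜)) * (W f).det := by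
    intro f
    have h2 : (U' * D).submatrix id f.1
        = Matrix.of (fun i j => (lam (f.1 j) : 𝕜) * (W f) i j) := by
      ext i j
      simp [hD, Matrix.mul_diagonal, Matrix.submatrix_apply, hW, mul_comm]
    rw [h2, Matrix.det_mul_row]
  have hNrow : ∀ f : {f : Fin k → Fin r // StrictMono f},
      N₀.submatrix f.1 id = (W f)ᴴ := by
    intro f
    ext i j
    simp [hN₀, hW, hU', Matrix.conjTranspose_apply, Matrix.submatrix_apply]
  set S₂ : ℝ := ∑ f : {f : Fin k → Fin r // StrictMono f},
    (∏ j : Fin k, lam (f.1 j)) * ‖(W f).det‖ ^ 2 with hS₂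
  have hII : ((U' * D) * N₀).det = (S₂ : 𝕜) := by
    rw [cauchyBinet, hS₂]
    push_cast
    refine Finset.sum_congr rfl fun f _ => ?_
    rw [hcol f, hNrow f, Matrix.det_conjTranspose, mul_assoc, RCLike.star_def,
      RCLike.mul_conj]
    all_goals (push_cast; ring)
  -- Step III
  have hUU : U * Uᴴ = 1 := by
    have h := Matrix.mem_unitaryGroup_iff.mp hH.eigenvectorUnitary.2
    rw [hU]
    simpa [Matrix.star_eq_conjTranspose] using h
  have hone : U' * N₀ = 1 := by
    have h := Matrix.submatrix_mul U Uᴴ ri id ri Function.bijective_id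
    rw [hU', hN₀, ← h, hUU]
    ext i j
    simp [Matrix.submatrix_apply, Matrix.one_apply, hri.injective.eq_iff]
  set S₃ : ℝ := ∑ f : {f : Fin k → Fin r // StrictMono f}, ‖(W f).det‖ ^ 2 with hS₃
  have hIII : S₃ = 1 := by
    have h : (1 : Matrix (Fin k) (Fin k) 𝕜).det = (S₃ : 𝕜) := by
      rw [← hone, cauchyBinet, hS₃]
      push_cast
      refine Finset.sum_congr rfl fun f _ => ?_
      rw [hNrow f, Matrix.det_conjTranspose, RCLike.star_def, RCLike.mul_conj]
      all_goals (push_cast; ring)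
    rw [Matrix.det_one] at h
    exact_mod_cast h.symm
  -- combine: S₁ = S₂
  have hS12 : S₁ = S₂ := by
    have : (S₁ : 𝕜) = (S₂ : 𝕜) := by rw [← hI, h0, hsub2, hII]
    exact_mod_cast this
  -- single term bound
  have hBC : C.submatrix id ci = A.submatrix ri ci := by
    rw [hC, Matrix.submatrix_submatrix]
    simp
  have hsingle : ‖(A.submatrix ri ci).det‖ ^ 2 ≤ S₁ := by
    have h := Finset.single_le_sum
      (f := fun f : {f : Fin k → Fin s // StrictMono f} => ‖(C.submatrix id f.1).det‖ ^ 2)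
      (fun f _ => sq_nonneg _) (Finset.mem_univ ⟨ci, hci⟩)
    rw [hS₁]
    simpa [hBC] using h
  -- S₂ ≤ Q
  have hS2Q : S₂ ≤ Q := by
    have hterm : ∀ f : {f : Fin k → Fin r // StrictMono f},
        (∏ j : Fin k, lam (f.1 j)) * ‖(W f).det‖ ^ 2 ≤ Q * ‖(W f).det‖ ^ 2 := by
      intro f
      refine mul_le_mul_of_nonneg_right ?_ (sq_nonneg _)
      have hg : Function.Injective (fun j => e.symm (f.1 j)) :=
        fun a b hab => f.2.injective (e.symm.injective hab)
      have heq : ∀ j, lam (f.1 j) = σ (e.symm (f.1 j)) ^ 2 := fun j => by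
        rw [hσ2 (e.symm (f.1 j)), Equiv.apply_symm_apply]
      calc ∏ j : Fin k, lam (f.1 j) = ∏ j : Fin k, σ (e.symm (f.1 j)) ^ 2 := by
            exact Finset.prod_congr rfl fun j _ => heq j
        _ ≤ ∏ i : Fin k, σ (Fin.castLE hkr i) ^ 2 :=
            prod_inj_le_top hkr (fun i => σ i ^ 2)
              (fun a b hab => pow_le_pow_left₀ (hpos b) (hmono hab) 2)
              (fun i => sq_nonneg _) _ hg
        _ = Q := hQ.symm
    calc S₂ ≤ ∑ f : {f : Fin k → Fin r // StrictMono f}, Q * ‖(W f).det‖ ^ 2 :=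
          Finset.sum_le_sum fun f _ => hterm f
      _ = Q * S₃ := by rw [hS₃, Finset.mul_sum]
      _ = Q := by rw [hIII, mul_one]
  -- conclude
  have hP : 0 ≤ ∏ i : Fin k, σ (Fin.castLE hkr i) :=
    Finset.prod_nonneg fun i _ => hpos _
  have hfin : ‖(A.submatrix ri ci).det‖ ^ 2 ≤ (∏ i : Fin k, σ (Fin.castLE hkr i)) ^ 2 := by
    rw [← Finset.prod_pow]
    exact le_trans hsingle (by rw [hS12]; exact hS2Q)
  nlinarith [norm_nonneg (A.submatrix ri ci).det, hP, hfin]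
end

section
/- Fix 1 ≤ k ≤ r ≤ s, strictly increasing tuples I = (i₁ < ⋯ < i_k) in {1,…,r} and J = (j₁ < ⋯ < j_k) in {1,…,s}. Let e₊ be the r×s matrix with (e₊)_{ij} = 1 if (i,j) = (i_ℓ, j_ℓ) for some ℓ and 0 otherwise, and let e₋ = e₊ᵀ. Then for every r×s matrix z over a field k, det(1_r − (e₊ − z)·e₋) equals the k-minor of z with rows I and columns J, i.e., the determinant of the submatrix (z_{i_a j_b})_{a,b}. -/
open Matrix

theorem generalized_minor_eq_usual_minor {K : Type*} [Field K] {k r s : ℕ}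
    (hk1 : 1 ≤ k) (hkr : k ≤ r) (hrs : r ≤ s)
    (ri : Fin k → Fin r) (ci : Fin k → Fin s)
    (hri : StrictMono ri) (hci : StrictMono ci)
    (ePlus : Matrix (Fin r) (Fin s) K)
    (hePlus : ∀ i j, ePlus i j = if ∃ ℓ : Fin k, i = ri ℓ ∧ j = ci ℓ then 1 else 0)
    (z : Matrix (Fin r) (Fin s) K) :
    ((1 : Matrix (Fin r) (Fin r) K) - (ePlus - z) * ePlusᵀ).det
      = (z.submatrix ri ci).det := by
  classical
  have hinj := hri.injective
  have hcinj := hci.injective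
  set M : Matrix (Fin r) (Fin r) K :=
    (1 : Matrix (Fin r) (Fin r) K) - (ePlus - z) * ePlusᵀ with hM
  have key1 : ∀ (i : Fin r) (b : Fin k), M i (ri b) = z i (ci b) := by
    intro i b
    have hmul : ((ePlus - z) * ePlusᵀ) i (ri b) = ePlus i (ci b) - z i (ci b) := by
      rw [Matrix.mul_apply]
      rw [Finset.sum_eq_single (ci b)]
      · have : ePlusᵀ (ci b) (ri b) = 1 := by
          rw [Matrix.transpose_apply, hePlus, if_pos ⟨b, rfl, rfl⟩]
        rw [this, mul_one, Matrix.sub_apply]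
      · intro j _ hj
        have hz : ePlusᵀ j (ri b) = 0 := by
          rw [Matrix.transpose_apply, hePlus, if_neg]
          rintro ⟨ℓ, h1, h2⟩
          exact hj (by rw [h2, hinj h1])
        rw [hz, mul_zero]
      · intro h; exact absurd (Finset.mem_univ _) h
    have hdiag : ePlus i (ci b) = if i = ri b then 1 else 0 := by
      rw [hePlus]
      congr 1
      apply propext
      constructor
      · rintro ⟨ℓ, h1, h2⟩; rw [h1, hcinj h2]
      · intro h; exact ⟨b, h, rfl⟩
    rw [hM, Matrix.sub_apply, hmul, hdiag, Matrix.one_apply]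
    by_cases h : i = ri b <;> simp [h]
  have key2 : ∀ (i i' : Fin r), i' ∉ Set.range ri →
      M i i' = (1 : Matrix (Fin r) (Fin r) K) i i' := by
    intro i i' h
    have hmul : ((ePlus - z) * ePlusᵀ) i i' = 0 := by
      rw [Matrix.mul_apply]
      apply Finset.sum_eq_zero
      intro j _
      have hz : ePlusᵀ j i' = 0 := by
        rw [Matrix.transpose_apply, hePlus, if_neg]
        rintro ⟨ℓ, h1, _⟩
        exact h ⟨ℓ, h1.symm⟩
      rw [hz, mul_zero]
    rw [hM, Matrix.sub_apply, hmul, sub_zero]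
  let e : (Fin k ⊕ ↥((Set.range ri)ᶜ)) ≃ Fin r :=
    (Equiv.sumCongr (Equiv.ofInjective ri hinj) (Equiv.refl _)).trans
      (Equiv.Set.sumCompl (Set.range ri))
  have he1 : ∀ a, e (Sum.inl a) = ri a := fun a => rfl
  have he2 : ∀ c, e (Sum.inr c) = c.1 := fun c => rfl
  rw [← Matrix.det_submatrix_equiv_self e M]
  have hblock : M.submatrix e e =
      Matrix.fromBlocks (z.submatrix ri ci) 0
        (Matrix.of fun (c : ↥((Set.range ri)ᶜ)) (b : Fin k) => z c.1 (ci b)) 1 := by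
    ext x y
    cases x with
    | inl a =>
      cases y with
      | inl b =>
        simp only [Matrix.submatrix_apply, he1, Matrix.fromBlocks_apply₁₁]
        rw [key1]
      | inr c =>
        simp only [Matrix.submatrix_apply, he1, he2, Matrix.fromBlocks_apply₁₂,
          Matrix.zero_apply]
        rw [key2 _ _ c.2, Matrix.one_apply, if_neg]
        intro h
        exact c.2 ⟨a, h⟩
    | inr c =>
      cases y with
      | inl b =>
        simp only [Matrix.submatrix_apply, he1, he2, Matrix.fromBlocks_apply₂₁]
        rw [key1]; rfl
      | inr c' =>
        simp only [Matrix.submatrix_apply, he2, Matrix.fromBlocks_apply₂₂]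
        rw [key2 _ _ c'.2, Matrix.one_apply, Matrix.one_apply]
        simp [Subtype.ext_iff]
  rw [hblock, Matrix.det_fromBlocks_zero₁₂, Matrix.det_one, mul_one]
end

section
/- With e₊ = [[A,0],[0,0]] ∈ k^{r×s} (A ∈ k^{k×k} invertible) and e₋ = [[A⁻¹,B],[C,CAB]] ∈ k^{s×r}, for any y = [[α,β],[γ,δ]] ∈ k^{s×r} with α ∈ k^{k×k}, one has det(1_r − e₊(e₋ − y)) = det(A)·det(α). -/
open Matrix

theorem minus_minor_formula {K : Type*} [Field K]
    {n m l : Type*} [Fintype n] [Fintype m] [Fintype l] [DecidableEq n] [DecidableEq m]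
    (A : Matrix n n K) (hA : IsUnit A.det)
    (B : Matrix n m K) (C : Matrix l n K)
    (y : Matrix (n ⊕ l) (n ⊕ m) K) :
    ((1 : Matrix (n ⊕ m) (n ⊕ m) K) -
        (Matrix.fromBlocks A 0 0 0 : Matrix (n ⊕ m) (n ⊕ l) K) *
          ((Matrix.fromBlocks A⁻¹ B C (C * A * B) : Matrix (n ⊕ l) (n ⊕ m) K) - y)).det
      = A.det * (y.toBlocks₁₁).det := by
  nth_rewrite 1 [← fromBlocks_toBlocks y]
  rw [show (1 : Matrix (n ⊕ m) (n ⊕ m) K) = fromBlocks 1 0 0 1 from (fromBlocks_one).symm]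
  simp only [sub_eq_add_neg, fromBlocks_neg, fromBlocks_add, fromBlocks_multiply,
    Matrix.zero_mul, Matrix.mul_zero, add_zero, zero_add, neg_zero, Matrix.mul_add,
    Matrix.mul_neg]
  rw [Matrix.mul_nonsing_inv A hA, det_fromBlocks_zero₂₁]
  simp [Matrix.det_mul, Matrix.mul_sub, ← sub_eq_add_neg]
end

section
/- Let x ∈ ℂ^{r×s} and y ∈ ℂ^{s×r} such that 1_r − xy is invertible. Then the directional derivative of the map (x,y) ↦ det(1_r − xy) at (x,y) along (u,v) ∈ ℂ^{r×s} × ℂ^{s×r} equals −det(1_r − xy)·(tr((1_r − xy)⁻¹ u y) + tr(x (1_s − yx)⁻¹ v)). -/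
/-!
With `A = 1 - x * y`, Jacobi's formula `d(det M) = tr (adj M * dM)`, the velocity
`dA = -(u * y + x * v)` and `adj A = det A • A⁻¹` give
`-det A * (tr (A⁻¹ u y) + tr (A⁻¹ x v))`; the push-through identity
`(1 - x * y)⁻¹ * x = x * (1 - y * x)⁻¹` turns the second trace into the stated one.
-/

open Matrix Finset

namespace Matrix

section CommRing

variable {R : Type*} [CommRing R] {m n : Type*} [Fintype m] [Fintype n] [DecidableEq m]
  [DecidableEq n]

theorem sum_det_updateCol_eq_trace_adjugate_mul (A B : Matrix n n R) :
    ∑ i, (A.updateCol i fun k => B k i).det = trace (A.adjugate * B) := by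
  simp only [← cramer_apply, cramer_eq_adjugate_mulVec]
  simp [trace, mul_apply, mulVec, dotProduct]

theorem det_updateCol_eq_sum_perm (A B : Matrix n n R) (i : n) :
    (A.updateCol i fun k => B k i).det
      = ∑ σ : Equiv.Perm n,
          (Equiv.Perm.sign σ : R) * (B (σ i) i * ∏ j ∈ univ.erase i, A (σ j) j) := by
  rw [det_apply']
  refine sum_congr rfl fun σ _ => ?_
  rw [← mul_prod_erase univ _ (mem_univ i), updateCol_self]
  congr 2
  exact prod_congr rfl fun j hj => updateCol_ne (ne_of_mem_erase hj)

theorem trace_adjugate_mul {A : Matrix n n R} (hA : IsUnit A.det) (B : Matrix n n R) :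
    trace (A.adjugate * B) = A.det * trace (A⁻¹ * B) := by
  have : A.adjugate = A.det • A⁻¹ := calc
    A.adjugate = A.adjugate * A * A⁻¹ := (mul_nonsing_inv_cancel_right _ _ hA).symm
    _ = A.det • A⁻¹ := by rw [adjugate_mul, smul_mul, Matrix.one_mul]
  rw [this, smul_mul, trace_smul, smul_eq_mul]

/-- When `1 - x * y` is singular both sides are `0`, since `det (1 - x * y) = det (1 - y * x)`. -/
theorem inv_one_sub_mul_mul (x : Matrix m n R) (y : Matrix n m R) :
    (1 - x * y)⁻¹ * x = x * (1 - y * x)⁻¹ := by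
  by_cases hd : IsUnit (1 - x * y).det
  · have hd' : IsUnit (1 - y * x).det := det_one_sub_mul_comm x y ▸ hd
    have hcomm : x * (1 - y * x) = (1 - x * y) * x := by
      simp only [Matrix.mul_sub, Matrix.sub_mul, Matrix.mul_one, Matrix.one_mul, Matrix.mul_assoc]
    calc (1 - x * y)⁻¹ * x = (1 - x * y)⁻¹ * (x * (1 - y * x)) * (1 - y * x)⁻¹ := by
          rw [← Matrix.mul_assoc, mul_nonsing_inv_cancel_right _ _ hd']
      _ = x * (1 - y * x)⁻¹ := by
          rw [hcomm, ← Matrix.mul_assoc, nonsing_inv_mul _ hd, Matrix.one_mul]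
  · have hd' : ¬IsUnit (1 - y * x).det := det_one_sub_mul_comm x y ▸ hd
    rw [nonsing_inv_apply_not_isUnit _ hd, nonsing_inv_apply_not_isUnit _ hd', Matrix.zero_mul,
      Matrix.mul_zero]

end CommRing

section Deriv

variable {𝕜 : Type*} [NontriviallyNormedField 𝕜] {t : 𝕜}

theorem hasDerivAt_add_smul_apply {m n : Type*} (a b : Matrix m n 𝕜) (i : m) (j : n) :
    HasDerivAt (fun s => (a + s • b) i j) (b i j) t := by
  simpa using ((hasDerivAt_id t).mul_const (b i j)).const_add (a i j)

theorem hasDerivAt_mul_apply {l m n : Type*} [Fintype l] {P : 𝕜 → Matrix m l 𝕜}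
    {Q : 𝕜 → Matrix l n 𝕜} {P' : Matrix m l 𝕜} {Q' : Matrix l n 𝕜}
    (hP : ∀ i k, HasDerivAt (fun s => P s i k) (P' i k) t)
    (hQ : ∀ k j, HasDerivAt (fun s => Q s k j) (Q' k j) t) (i : m) (j : n) :
    HasDerivAt (fun s => (P s * Q s) i j) ((P' * Q t + P t * Q') i j) t := by
  simp only [mul_apply, add_apply, ← sum_add_distrib]
  exact HasDerivAt.fun_sum fun k _ => (hP i k).fun_mul (hQ k j)

theorem hasDerivAt_one_sub_add_smul_mul_add_smul_apply {m n : Type*} [Fintype n] [DecidableEq m]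
    (x u : Matrix m n 𝕜) (y v : Matrix n m 𝕜) (i j : m) :
    HasDerivAt (fun s => ((1 : Matrix m m 𝕜) - (x + s • u) * (y + s • v)) i j)
      ((-(u * (y + t • v) + (x + t • u) * v)) i j) t := by
  simpa only [sub_apply, neg_apply] using (hasDerivAt_mul_apply (hasDerivAt_add_smul_apply x u)
    (hasDerivAt_add_smul_apply y v) i j).const_sub ((1 : Matrix m m 𝕜) i j)

theorem hasDerivAt_det {n : Type*} [Fintype n] [DecidableEq n] {M : 𝕜 → Matrix n n 𝕜}
    {M' : Matrix n n 𝕜} (hM : ∀ i j, HasDerivAt (fun s => M s i j) (M' i j) t) :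
    HasDerivAt (fun s => (M s).det) (trace ((M t).adjugate * M')) t := by
  simp only [det_apply']
  refine HasDerivAt.congr_deriv (HasDerivAt.fun_sum fun σ _ =>
    (HasDerivAt.fun_finsetProd fun i _ => hM (σ i) i).const_mul (Equiv.Perm.sign σ : 𝕜)) ?_
  simp only [← sum_det_updateCol_eq_trace_adjugate_mul, det_updateCol_eq_sum_perm, mul_sum,
    smul_eq_mul]
  rw [sum_comm]
  exact sum_congr rfl fun i _ => sum_congr rfl fun σ _ => by ring

end Deriv

end Matrix

theorem directional_derivative_jordan_pair_det {r s : ℕ}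
    (x : Matrix (Fin r) (Fin s) ℂ) (y : Matrix (Fin s) (Fin r) ℂ)
    (h : IsUnit ((1 : Matrix (Fin r) (Fin r) ℂ) - x * y))
    (u : Matrix (Fin r) (Fin s) ℂ) (v : Matrix (Fin s) (Fin r) ℂ) :
    deriv (fun t : ℂ =>
        ((1 : Matrix (Fin r) (Fin r) ℂ) - (x + t • u) * (y + t • v)).det) 0
      = -((1 : Matrix (Fin r) (Fin r) ℂ) - x * y).det *
          (Matrix.trace (((1 : Matrix (Fin r) (Fin r) ℂ) - x * y)⁻¹ * u * y) +
            Matrix.trace (x * ((1 : Matrix (Fin s) (Fin s) ℂ) - y * x)⁻¹ * v)) := by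
  rw [(hasDerivAt_det (hasDerivAt_one_sub_add_smul_mul_add_smul_apply x u y v (t := 0))).deriv]
  simp only [zero_smul, add_zero]
  rw [trace_adjugate_mul ((isUnit_iff_isUnit_det _).mp h), Matrix.mul_neg, Matrix.mul_add,
    ← Matrix.mul_assoc, ← Matrix.mul_assoc, inv_one_sub_mul_mul, trace_neg, trace_add]
  ring
end

section
/- Let e, c be r×s complex partial isometries (e eᴴ e = e, c cᴴ c = c) such that e ℂ^{s×r} e = c ℂ^{s×r} c as subspaces of ℂ^{r×s} (equal principal inner ideals). Then det(1_r − (c − e)cᴴ) · det(1_r − c(cᴴ − eᴴ)) = 1. -/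
open Matrix

theorem minor_product_one_of_equal_inner_ideals {r s : ℕ}
    (e c : Matrix (Fin r) (Fin s) ℂ)
    (he : e * eᴴ * e = e) (hc : c * cᴴ * c = c)
    (hideal : (Set.range fun y : Matrix (Fin s) (Fin r) ℂ => e * y * e)
      = (Set.range fun y : Matrix (Fin s) (Fin r) ℂ => c * y * c)) :
    ((1 : Matrix (Fin r) (Fin r) ℂ) - (c - e) * cᴴ).det *
      ((1 : Matrix (Fin r) (Fin r) ℂ) - c * (cᴴ - eᴴ)).det = 1 := by
  obtain ⟨y, hy⟩ : e ∈ Set.range fun y : Matrix (Fin s) (Fin r) ℂ => c * y * c := by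
    rw [← hideal]; exact ⟨eᴴ, he⟩
  obtain ⟨z, hz⟩ : c ∈ Set.range fun y : Matrix (Fin s) (Fin r) ℂ => e * y * e := by
    rw [hideal]; exact ⟨cᴴ, hc⟩
  simp only at hy hz
  -- basic identities
  have h1 : c * cᴴ * e = e := by
    conv_lhs => rw [← hy]
    rw [show c * cᴴ * (c * y * c) = (c * cᴴ * c) * y * c by
      simp only [Matrix.mul_assoc], hc, hy]
  have h2 : e * cᴴ * c = e := by
    conv_lhs => rw [← hy]
    rw [show c * y * c * cᴴ * c = (c * y) * (c * cᴴ * c) by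
      simp only [Matrix.mul_assoc], hc, hy]
  have h3 : e * eᴴ * c = c := by
    conv_lhs => rw [← hz]
    rw [show e * eᴴ * (e * z * e) = (e * eᴴ * e) * z * e by
      simp only [Matrix.mul_assoc], he, hz]
  -- e*eᴴ = c*cᴴ
  have hQP : e * eᴴ * (c * cᴴ) = c * cᴴ := by
    rw [show e * eᴴ * (c * cᴴ) = (e * eᴴ * c) * cᴴ by
      simp only [Matrix.mul_assoc], h3]
  have hPQ : c * cᴴ * (e * eᴴ) = e * eᴴ := by
    rw [show c * cᴴ * (e * eᴴ) = (c * cᴴ * e) * eᴴ by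
      simp only [Matrix.mul_assoc], h1]
  have hP : e * eᴴ = c * cᴴ := by
    have hT := congrArg conjTranspose hPQ
    simp only [conjTranspose_mul, conjTranspose_conjTranspose, ← Matrix.mul_assoc] at hT
    -- hT : e * eᴴ * c * cᴴ = e * eᴴ  (left-assoc)
    rw [← hQP, ← Matrix.mul_assoc, hT]
  -- square matrix identities
  have hPP : (c * cᴴ) * (c * cᴴ) = c * cᴴ := by
    rw [show (c * cᴴ) * (c * cᴴ) = (c * cᴴ * c) * cᴴ by
      simp only [Matrix.mul_assoc], hc]
  have hPE2 : (c * cᴴ) * (c * eᴴ) = c * eᴴ := by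
    rw [show (c * cᴴ) * (c * eᴴ) = (c * cᴴ * c) * eᴴ by
      simp only [Matrix.mul_assoc], hc]
  have hE1P : (e * cᴴ) * (c * cᴴ) = e * cᴴ := by
    rw [show (e * cᴴ) * (c * cᴴ) = (e * cᴴ * c) * cᴴ by
      simp only [Matrix.mul_assoc], h2]
  have hE1E2 : (e * cᴴ) * (c * eᴴ) = c * cᴴ := by
    rw [show (e * cᴴ) * (c * eᴴ) = (e * cᴴ * c) * eᴴ by
      simp only [Matrix.mul_assoc], h2, hP]
  have main : ∀ (P E1 E2 : Matrix (Fin r) (Fin r) ℂ), P * P = P → P * E2 = E2 →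
      E1 * P = E1 → E1 * E2 = P → (1 - P + E1) * (1 - P + E2) = 1 := by
    intro P E1 E2 k1 k2 k3 k4
    calc (1 - P + E1) * (1 - P + E2)
        = 1 - P + E2 - (P - P * P + P * E2) + (E1 - E1 * P + E1 * E2) := by
          noncomm_ring
      _ = 1 := by rw [k1, k2, k3, k4]; abel
  have hA : (1 : Matrix (Fin r) (Fin r) ℂ) - (c - e) * cᴴ = 1 - c * cᴴ + e * cᴴ := by
    rw [Matrix.sub_mul]; abel
  have hB : (1 : Matrix (Fin r) (Fin r) ℂ) - c * (cᴴ - eᴴ) = 1 - c * cᴴ + c * eᴴ := by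
    rw [Matrix.mul_sub]; abel
  have hAB : ((1 : Matrix (Fin r) (Fin r) ℂ) - (c - e) * cᴴ) *
      ((1 : Matrix (Fin r) (Fin r) ℂ) - c * (cᴴ - eᴴ)) = 1 := by
    rw [hA, hB]; exact main _ _ _ hPP hPE2 hE1P hE1E2
  rw [← Matrix.det_mul, hAB, Matrix.det_one]
end

section
/- Let z be a complex r×r matrix with singular values σ₁ ≥ ⋯ ≥ σ_r ≥ 0, and let m₁ ≥ m₂ ≥ ⋯ ≥ m_r ≥ 0 be integers. For 1 ≤ k ≤ r, let Δ_k(z) denote the leading principal k×k minor of z (determinant of the top-left k×k block). Then |Δ₁(z)^{m₁−m₂} · Δ₂(z)^{m₂−m₃} ⋯ Δ_{r−1}(z)^{m_{r−1}−m_r} · Δ_r(z)^{m_r}| ≤ σ₁^{m₁} σ₂^{m₂} ⋯ σ_r^{m_r}. -/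
/-! The leading minor `Δ_k(z)` is a maximal minor of the block `Z` formed by the first `k` rows
of `z`, so by Cauchy–Binet `|Δ_k(z)|² ≤ det (Z Zᴴ)`. Diagonalising `z zᴴ = U diag(λ) Uᴴ` makes
`Z Zᴴ = F diag(λ) Fᴴ` with `F Fᴴ = 1`, and Cauchy–Binet once more writes `det (Z Zᴴ)` as a convex
combination of products of `k` of the eigenvalues `λ = σ²`, each at most `σ₁² ⋯ σ_k²`. Hence
`|Δ_k(z)| ≤ σ₁ ⋯ σ_k`, and the estimate follows because `σ_i ^ m_i` is the telescoping product
of the factors `σ_i ^ (m_k - m_{k+1})` over `k ≥ i`. -/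

open Matrix

theorem Fin.val_le_val_of_strictMono {k r : ℕ} {f : Fin k → Fin r} (hf : StrictMono f)
    (i : Fin k) : (i : ℕ) ≤ f i := by
  have := Finset.card_le_card_of_injOn (s := Finset.Iic i) (t := Finset.Iic (f i)) f
    (fun j hj => Finset.mem_Iic.2 (hf.monotone (Finset.mem_Iic.1 hj))) hf.injective.injOn
  simpa using this

theorem Fin.prod_le_prod_Iic_of_antitone {R : Type*} [CommMonoidWithZero R] [Preorder R]
    [ZeroLEOneClass R] [PosMulMono R] {r : ℕ} {ν : Fin r → R} (hν : Antitone ν)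
    (h0 : ∀ i, 0 ≤ ν i) {k : Fin r} {t : Finset (Fin r)} (ht : t.card = k + 1) :
    ∏ j ∈ t, ν j ≤ ∏ j ∈ Finset.Iic k, ν j := by
  have hk : (k : ℕ) + 1 ≤ r := k.isLt
  have hIic : ∏ j ∈ Finset.Iic k, ν j = ∏ i : Fin (k + 1), ν (Fin.castLE hk i) := by
    have h := Fin.prod_Iic_castLE hk ν (Fin.last k)
    rwa [show (Fin.last k).castLE hk = k from rfl, ← Fin.top_eq_last, Finset.Iic_top] at h
  rw [hIic, ← t.map_orderEmbOfFin_univ ht, Finset.prod_map]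
  exact Finset.prod_le_prod (fun _ _ => h0 _) fun i _ =>
    hν (Fin.le_def.2 (Fin.val_le_val_of_strictMono (t.orderEmbOfFin ht).strictMono i))

theorem Finset.image_orderEmbOfFin_comp_perm {α : Type*} [LinearOrder α] {k : ℕ} (s : Finset α)
    (hs : s.card = k) (π : Equiv.Perm (Fin k)) :
    Finset.univ.image (s.orderEmbOfFin hs ∘ π) = s := by
  rw [← Finset.image_image, Finset.image_univ_equiv, Finset.image_orderEmbOfFin_univ]

theorem bijective_orderEmbOfFin_comp_perm {α : Type*} [LinearOrder α] {k : ℕ} :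
    Function.Bijective fun sπ : {s : Finset α // s.card = k} × Equiv.Perm (Fin k) =>
      (⟨sπ.1.1.orderEmbOfFin sπ.1.2 ∘ sπ.2,
        (sπ.1.1.orderEmbOfFin sπ.1.2).injective.comp sπ.2.injective⟩ :
        {φ : Fin k → α // Function.Injective φ}) := by
  constructor
  · rintro ⟨⟨s, hs⟩, π⟩ ⟨⟨s', hs'⟩, π'⟩ h
    have h : s.orderEmbOfFin hs ∘ π = s'.orderEmbOfFin hs' ∘ π' := congrArg Subtype.val h
    obtain rfl : s = s' := by
      rw [← s.image_orderEmbOfFin_comp_perm hs π, h, s'.image_orderEmbOfFin_comp_perm hs' π']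
    obtain rfl : π = π' := Equiv.ext fun i => (s.orderEmbOfFin hs).injective (congrFun h i)
    rfl
  · rintro ⟨φ, hφ⟩
    set τ := Tuple.sort φ
    have hcard : (Finset.univ.image φ).card = k := by
      rw [Finset.card_image_of_injective _ hφ, Finset.card_fin]
    have hsorted : φ ∘ τ = (Finset.univ.image φ).orderEmbOfFin hcard :=
      Finset.orderEmbOfFin_unique hcard (fun i => Finset.mem_image_of_mem _ (Finset.mem_univ _))
        ((Tuple.monotone_sort φ).strictMono_of_injective (hφ.comp τ.injective))
    refine ⟨(⟨_, hcard⟩, τ⁻¹), Subtype.ext ?_⟩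
    simp only [← hsorted]
    ext i
    simp

section

variable {α : Type*} [Fintype α] [LinearOrder α] {k : ℕ}

namespace Matrix

variable {R : Type*} [CommRing R]

theorem det_mul_eq_sum_prod_mul_det_submatrix {m n : Type*} [Fintype m] [DecidableEq m]
    [Fintype n] (A : Matrix m n R) (B : Matrix n m R) :
    det (A * B) = ∑ φ : m → n, (∏ i, A i (φ i)) * det (B.submatrix φ id) := by
  have hrows : A * B = of fun i => ∑ j, A i j • B j := by
    ext i l
    simp [mul_apply]
  have := (detRowAlternating : (m → R) [⋀^m]→ₗ[R] R).toMultilinearMap.map_sum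
    fun i (j : n) => A i j • B j
  simp only [MultilinearMap.map_smul_univ] at this
  exact hrows ▸ this

/-- The Cauchy–Binet formula. -/
theorem det_mul_eq_sum_det_submatrix_mul_det_submatrix (A : Matrix (Fin k) α R)
    (B : Matrix α (Fin k) R) :
    det (A * B) = ∑ s : {s : Finset α // s.card = k},
      det (A.submatrix id (s.1.orderEmbOfFin s.2)) *
        det (B.submatrix (s.1.orderEmbOfFin s.2) id) := by
  classical
  set term : (Fin k → α) → R := fun φ => (∏ i, A i (φ i)) * det (B.submatrix φ id)
  have hterm : ∀ φ, term φ ≠ 0 → Function.Injective φ := fun φ hφ => by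
    by_contra hinj
    obtain ⟨i, j, hij, hne⟩ : ∃ i j, φ i = φ j ∧ i ≠ j := by
      simpa [Function.Injective] using hinj
    have hrow : B.submatrix φ id i = B.submatrix φ id j := by
      ext l
      simp [hij]
    exact hφ (by simp [term, det_zero_of_row_eq hne hrow])
  calc det (A * B) = ∑ φ : {φ : Fin k → α // Function.Injective φ}, term φ := by
        rw [det_mul_eq_sum_prod_mul_det_submatrix, ← Finset.sum_filter_of_ne fun φ _ => hterm φ,
          Finset.sum_subtype (p := Function.Injective) _ (by simp)]
    _ = ∑ s : {s : Finset α // s.card = k}, ∑ π : Equiv.Perm (Fin k),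
          term (s.1.orderEmbOfFin s.2 ∘ π) := by
        rw [← Fintype.sum_prod_type']
        exact (Fintype.sum_bijective _ bijective_orderEmbOfFin_comp_perm _ _ fun _ => rfl).symm
    _ = _ := by
        refine Fintype.sum_congr _ _ fun s => ?_
        set e := s.1.orderEmbOfFin s.2
        have hperm : ∀ π : Equiv.Perm (Fin k), term (e ∘ π) =
            (Equiv.Perm.sign π * ∏ i, (A.submatrix id e)ᵀ (π i) i) * det (B.submatrix e id) := by
          intro π
          simp only [term]
          rw [show B.submatrix (e ∘ π) id = (B.submatrix e id).submatrix π id from rfl,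
            det_permute]
          simp only [transpose_apply, submatrix_apply, id_eq, Function.comp_apply]
          ring
        rw [Fintype.sum_congr _ _ hperm, ← Finset.sum_mul, ← det_apply', det_transpose]

variable {𝕜 : Type*} [RCLike 𝕜]

theorem det_mul_diagonal_mul_conjTranspose (A : Matrix (Fin k) α 𝕜) (d : α → ℝ) :
    det (A * diagonal (fun j => (d j : 𝕜)) * Aᴴ) =
      ((∑ s : {s : Finset α // s.card = k},
        (∏ j ∈ s.1, d j) * ‖det (A.submatrix id (s.1.orderEmbOfFin s.2))‖ ^ 2 : ℝ) : 𝕜) := by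
  rw [det_mul_eq_sum_det_submatrix_mul_det_submatrix]
  push_cast
  refine Fintype.sum_congr _ _ fun s => ?_
  set e := s.1.orderEmbOfFin s.2
  have hdiag : (A * diagonal (fun j => (d j : 𝕜))).submatrix id e =
      A.submatrix id e * diagonal (fun i => (d (e i) : 𝕜)) := by
    ext i j
    simp [mul_apply, diagonal_apply]
  rw [hdiag, ← conjTranspose_submatrix, det_mul, det_diagonal, det_conjTranspose, mul_right_comm,
    mul_comm, ← s.1.map_orderEmbOfFin_univ s.2, Finset.prod_map, RCLike.star_def,
    RCLike.mul_conj]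
  rfl

theorem det_mul_conjTranspose_self_eq_sum (A : Matrix (Fin k) α 𝕜) :
    det (A * Aᴴ) = ((∑ s : {s : Finset α // s.card = k},
      ‖det (A.submatrix id (s.1.orderEmbOfFin s.2))‖ ^ 2 : ℝ) : 𝕜) := by
  simpa using det_mul_diagonal_mul_conjTranspose A 1

theorem norm_det_submatrix_sq_le_re_det_mul_conjTranspose (A : Matrix (Fin k) α 𝕜)
    {g : Fin k → α} (hg : StrictMono g) :
    ‖det (A.submatrix id g)‖ ^ 2 ≤ RCLike.re (det (A * Aᴴ)) := by
  have hcard : (Finset.univ.image g).card = k := by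
    rw [Finset.card_image_of_injective _ hg.injective, Finset.card_fin]
  set s₀ : {s : Finset α // s.card = k} := ⟨_, hcard⟩
  have hsorted : g = s₀.1.orderEmbOfFin s₀.2 :=
    Finset.orderEmbOfFin_unique hcard (fun i => Finset.mem_image_of_mem _ (Finset.mem_univ _)) hg
  rw [det_mul_conjTranspose_self_eq_sum, RCLike.ofReal_re, hsorted]
  exact Finset.single_le_sum (f := fun s : {s : Finset α // s.card = k} =>
    ‖det (A.submatrix id (s.1.orderEmbOfFin s.2))‖ ^ 2) (fun _ _ => sq_nonneg _)
    (Finset.mem_univ s₀)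

theorem re_det_mul_diagonal_mul_conjTranspose_le {F : Matrix (Fin k) α 𝕜} (hF : F * Fᴴ = 1)
    {d : α → ℝ} {c : ℝ} (hc : ∀ t : Finset α, t.card = k → ∏ j ∈ t, d j ≤ c) :
    RCLike.re (det (F * diagonal (fun j => (d j : 𝕜)) * Fᴴ)) ≤ c := by
  set w : {s : Finset α // s.card = k} → ℝ :=
    fun s => ‖det (F.submatrix id (s.1.orderEmbOfFin s.2))‖ ^ 2
  have hw : ∑ s, w s = 1 := by
    have h := det_mul_conjTranspose_self_eq_sum F
    rw [hF, det_one] at h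
    exact_mod_cast h.symm
  rw [det_mul_diagonal_mul_conjTranspose, RCLike.ofReal_re]
  calc ∑ s, (∏ j ∈ s.1, d j) * w s ≤ ∑ s, c * w s :=
        Finset.sum_le_sum fun s _ => mul_le_mul_of_nonneg_right (hc s.1 s.2) (sq_nonneg _)
    _ = c := by rw [← Finset.mul_sum, hw, mul_one]

theorem norm_det_submatrix_sq_le (z : Matrix α α 𝕜) {g : Fin k → α} (hg : StrictMono g) {c : ℝ}
    (hc : ∀ t : Finset α, t.card = k →
      ∏ j ∈ t, (isHermitian_mul_conjTranspose_self z).eigenvalues j ≤ c) :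
    ‖det (z.submatrix g g)‖ ^ 2 ≤ c := by
  have hH := isHermitian_mul_conjTranspose_self z
  set U := (hH.eigenvectorUnitary : Matrix α α 𝕜)
  set D := diagonal (fun j => (hH.eigenvalues j : 𝕜))
  have hleft : ∀ M N : Matrix α α 𝕜, M.submatrix g id * N = (M * N).submatrix g id :=
    fun M N => by rw [submatrix_mul _ _ _ _ _ Function.bijective_id, submatrix_id_id]
  have hrows : ∀ M N : Matrix α α 𝕜,
      M.submatrix g id * (N.submatrix g id)ᴴ = (M * Nᴴ).submatrix g g := fun M N => by
    rw [conjTranspose_submatrix, submatrix_mul _ _ _ _ _ Function.bijective_id]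
  have hspec : z * zᴴ = U * D * Uᴴ := by
    simpa [Unitary.conjStarAlgAut_apply, star_eq_conjTranspose, Function.comp_def]
      using hH.spectral_theorem
  have hcompress : z.submatrix g id * (z.submatrix g id)ᴴ =
      U.submatrix g id * D * (U.submatrix g id)ᴴ := by
    rw [hleft, hrows, hrows, ← hspec]
  have hU : U.submatrix g id * (U.submatrix g id)ᴴ = 1 := by
    rw [hrows, ← star_eq_conjTranspose, (mem_unitaryGroup_iff).mp hH.eigenvectorUnitary.2,
      submatrix_one _ hg.injective]
  have hCB := norm_det_submatrix_sq_le_re_det_mul_conjTranspose (z.submatrix g id) hg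
  rw [submatrix_submatrix, hcompress] at hCB
  exact hCB.trans (re_det_mul_diagonal_mul_conjTranspose_le hU hc)

theorem norm_det_submatrix_castLE_le {r : ℕ} (z : Matrix (Fin r) (Fin r) 𝕜) {σ : Fin r → ℝ}
    (hmono : Antitone σ) (hpos : ∀ i, 0 ≤ σ i) (p : Equiv.Perm (Fin r))
    (hp : ∀ i, σ i = √((isHermitian_mul_conjTranspose_self z).eigenvalues (p i))) (k : Fin r) :
    ‖det (z.submatrix (Fin.castLE k.isLt) (Fin.castLE k.isLt))‖ ≤ ∏ i ∈ Finset.Iic k, σ i := by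
  have hsq : ∀ i, σ (p.symm i) ^ 2 = (isHermitian_mul_conjTranspose_self z).eigenvalues i :=
    fun i => by
      rw [hp, Equiv.apply_symm_apply, Real.sq_sqrt (eigenvalues_self_mul_conjTranspose_nonneg z i)]
  refine (pow_le_pow_iff_left₀ (norm_nonneg _) (Finset.prod_nonneg fun i _ => hpos i)
    two_ne_zero).1 (norm_det_submatrix_sq_le z (Fin.strictMono_castLE _) fun t ht => ?_)
  have h := Fin.prod_le_prod_Iic_of_antitone (t := t.map p.symm.toEmbedding)
    (fun a b hab => pow_le_pow_left₀ (hpos b) (hmono hab) 2) (fun _ => sq_nonneg _)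
    (by rw [Finset.card_map, ht])
  rw [Finset.prod_map] at h
  rw [← Finset.prod_pow, ← Finset.prod_congr rfl fun i _ => hsq i]
  exact h

end Matrix

end

def successiveDiff {r : ℕ} (m : Fin r → ℕ) (k : Fin r) : ℕ :=
  if h : (k : ℕ) + 1 < r then m k - m ⟨k + 1, h⟩ else m k

theorem sum_Ici_successiveDiff {r : ℕ} {m : Fin r → ℕ} (hm : Antitone m) (i : Fin r) :
    ∑ k ∈ Finset.Ici i, successiveDiff m k = m i := by
  obtain _ | n := r
  · exact i.elim0
  induction i using Fin.reverseInduction with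
  | last => simp [← Fin.top_eq_last, successiveDiff]
  | cast i ih =>
    have hIoi : Finset.Ioi i.castSucc = Finset.Ici i.succ := by
      ext j
      simp [Fin.castSucc_lt_iff_succ_le]
    rw [Finset.Ici_eq_cons_Ioi, Finset.sum_cons, hIoi, ih, successiveDiff, dif_pos (by simp)]
    exact Nat.sub_add_cancel (hm (Fin.castSucc_le_succ i))

theorem prod_prod_Iic_pow_successiveDiff {M : Type*} [CommMonoid M] {r : ℕ} {m : Fin r → ℕ}
    (hm : Antitone m) (a : Fin r → M) :
    ∏ k, (∏ i ∈ Finset.Iic k, a i) ^ successiveDiff m k = ∏ i, a i ^ m i := by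
  simp_rw [← Finset.prod_pow]
  rw [Finset.prod_comm' (t' := Finset.univ) (s' := fun i => Finset.Ici i) (by simp)]
  refine Finset.prod_congr rfl fun i _ => ?_
  rw [Finset.prod_pow_eq_pow_sum, sum_Ici_successiveDiff hm]

theorem highest_weight_vector_estimate {r : ℕ}
    (z : Matrix (Fin r) (Fin r) ℂ) (σ : Fin r → ℝ)
    (hmono : Antitone σ) (hpos : ∀ i, 0 ≤ σ i)
    (hsv : ∃ p : Equiv.Perm (Fin r), ∀ i,
      σ i = Real.sqrt ((Matrix.isHermitian_mul_conjTranspose_self z).eigenvalues (p i)))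
    (m : Fin r → ℕ) (hm : Antitone m) :
    ‖∏ k : Fin r,
        (z.submatrix (Fin.castLE (Nat.succ_le_of_lt k.isLt))
            (Fin.castLE (Nat.succ_le_of_lt k.isLt)) : Matrix (Fin ((k : ℕ) + 1)) (Fin ((k : ℕ) + 1)) ℂ).det ^
          (if h : (k : ℕ) + 1 < r then m k - m ⟨(k : ℕ) + 1, h⟩ else m k)‖
      ≤ ∏ i : Fin r, σ i ^ m i := by
  obtain ⟨p, hp⟩ := hsv
  calc _ = ∏ k : Fin r, ‖(z.submatrix (Fin.castLE k.isLt) (Fin.castLE k.isLt)).det‖ ^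
          successiveDiff m k := by
        simp only [norm_prod, norm_pow]
        rfl
    _ ≤ ∏ k : Fin r, (∏ i ∈ Finset.Iic k, σ i) ^ successiveDiff m k :=
        Finset.prod_le_prod (fun _ _ => by positivity) fun k _ =>
          pow_le_pow_left₀ (norm_nonneg _) (norm_det_submatrix_castLE_le z hmono hpos p hp k) _
    _ = ∏ i, σ i ^ m i := prod_prod_Iic_pow_successiveDiff hm σ
end

section
/- Let e₁, …, e_k be pairwise strongly orthogonal rank-one partial isometries in ℂ^{r×s} (e_i e_iᴴ e_i = e_i, and e_i e_jᴴ = 0, e_iᴴ e_j = 0 for i ≠ j), let c = e₁ + ⋯ + e_k, and let z = μ₁ e₁ + ⋯ + μ_k e_k with μ_i ∈ ℂ. Then det(1_r − (c − z)cᴴ) = μ₁ μ₂ ⋯ μ_k. -/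
/-! With `P i = e i * (e i)ᴴ`, strong orthogonality turns `(c - z) * cᴴ` into
`∑ i, (1 - μ i) • P i`, where the `P i` are rank-one idempotents with `P i * P j = 0`
for `i ≠ j`. The latter makes `1 - ∑ aᵢ Pᵢ` factor as `∏ (1 - aᵢ Pᵢ)`, and for a rank-one
idempotent `P` the matrix determinant lemma gives
`det (1 - a • P) = 1 - a * trace P = 1 - a * rank P = 1 - a`. -/

open Matrix Finset

namespace Matrix

section Field

variable {m n K : Type*} [Field K]

theorem exists_eq_vecMulVec_of_rank_le_one [Fintype n] [DecidableEq n] {A : Matrix m n K}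
    (h : A.rank ≤ 1) : ∃ u v, A = vecMulVec u v := by
  obtain ⟨w, hw⟩ := finrank_le_one_iff.mp h
  choose c hc using fun j => hw ⟨A *ᵥ Pi.single j 1, Pi.single j 1, rfl⟩
  refine ⟨w, c, ?_⟩
  ext i j
  simpa [vecMulVec_apply, mul_comm] using (congrFun (congrArg Subtype.val (hc j)) i).symm

variable [Fintype m] [DecidableEq m]

theorem det_one_add_of_rank_le_one {A : Matrix m m K} (h : A.rank ≤ 1) :
    det (1 + A) = 1 + trace A := by
  obtain ⟨u, v, rfl⟩ := exists_eq_vecMulVec_of_rank_le_one h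
  rw [vecMulVec_eq Unit, det_one_add_replicateCol_mul_replicateRow,
    trace_replicateCol_mul_replicateRow, dotProduct_comm]

theorem trace_eq_rank_of_isIdempotentElem {P : Matrix m m K} (hP : IsIdempotentElem P) :
    trace P = P.rank := by
  have hP' : IsIdempotentElem P.toLin' := hP.map toLinAlgEquiv'
  rw [← trace_toLin'_eq, (LinearMap.IsIdempotentElem.isProj_range _ hP').trace, rank]
  rfl

theorem det_one_sub_smul_of_isIdempotentElem {P : Matrix m m K} (hP : IsIdempotentElem P)
    (hrank : P.rank = 1) (a : K) : det (1 - a • P) = 1 - a := by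
  have hle : (-(a • P)).rank ≤ 1 := by
    rw [← hrank, ← mul_smul_one, ← Matrix.mul_neg]
    exact rank_mul_le_left _ _
  rw [sub_eq_add_neg, det_one_add_of_rank_le_one hle, trace_neg, trace_smul,
    trace_eq_rank_of_isIdempotentElem hP, hrank, Nat.cast_one, smul_eq_mul, mul_one,
    ← sub_eq_add_neg]

end Field

theorem det_one_sub_sum_of_mul_eq_zero {ι m R : Type*} [Fintype m] [DecidableEq m] [CommRing R]
    {P : ι → Matrix m m R} (hP : ∀ i j, i ≠ j → P i * P j = 0) (S : Finset ι) :
    det (1 - ∑ i ∈ S, P i) = ∏ i ∈ S, det (1 - P i) := by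
  classical
  induction S using Finset.induction with
  | empty => simp
  | insert a S ha ih =>
    have hmul : P a * ∑ i ∈ S, P i = 0 := by
      rw [mul_sum]
      exact sum_eq_zero fun j hj => hP a j (ne_of_mem_of_not_mem hj ha).symm
    have hfactor : 1 - ∑ i ∈ insert a S, P i = (1 - P a) * (1 - ∑ i ∈ S, P i) := by
      rw [sum_insert ha, sub_mul, one_mul, mul_sub, mul_one, hmul, sub_zero]
      abel
    rw [hfactor, det_mul, ih, prod_insert ha]

theorem sum_smul_mul_sum_of_mul_eq_zero {ι l m n R : Type*} [Fintype ι] [Fintype n]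
    [CommSemiring R] (a : ι → R) {A : ι → Matrix l n R} {B : ι → Matrix n m R}
    (h : ∀ i j, i ≠ j → A i * B j = 0) :
    (∑ i, a i • A i) * ∑ j, B j = ∑ i, a i • (A i * B i) := by
  rw [Matrix.sum_mul]
  refine sum_congr rfl fun i _ => ?_
  rw [Matrix.mul_sum, sum_eq_single i (fun j _ hji => by rw [smul_mul, h i j hji.symm, smul_zero])
    (fun hi => absurd (mem_univ i) hi), smul_mul]

theorem isIdempotentElem_mul_conjTranspose_of_tripotent {m n R : Type*} [Fintype m] [Fintype n]
    [Semiring R] [StarRing R] {e : Matrix m n R} (he : e * eᴴ * e = e) :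
    IsIdempotentElem (e * eᴴ) := by
  rw [IsIdempotentElem, ← Matrix.mul_assoc, he]

end Matrix

theorem minor_of_spectral_decomposition {r s k : ℕ}
    (e : Fin k → Matrix (Fin r) (Fin s) ℂ)
    (htri : ∀ i, e i * (e i)ᴴ * e i = e i)
    (hrank : ∀ i, (e i).rank = 1)
    (horth : ∀ i j, i ≠ j → e i * (e j)ᴴ = 0 ∧ (e i)ᴴ * e j = 0)
    (μ : Fin k → ℂ) :
    ((1 : Matrix (Fin r) (Fin r) ℂ) -
        ((∑ i, e i) - ∑ i, μ i • e i) * (∑ i, e i)ᴴ).det = ∏ i, μ i := by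
  have hdiff : (∑ i, e i) - ∑ i, μ i • e i = ∑ i, (1 - μ i) • e i := by
    simp only [sub_smul, one_smul, sum_sub_distrib]
  have horthProj : ∀ i j, i ≠ j →
      (1 - μ i) • (e i * (e i)ᴴ) * ((1 - μ j) • (e j * (e j)ᴴ)) = 0 := by
    intro i j hij
    rw [smul_mul_smul_comm, Matrix.mul_assoc, ← Matrix.mul_assoc (e i)ᴴ, (horth i j hij).2,
      Matrix.zero_mul, Matrix.mul_zero, smul_zero]
  rw [hdiff, conjTranspose_sum,
    sum_smul_mul_sum_of_mul_eq_zero _ fun i j hij => (horth i j hij).1,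
    det_one_sub_sum_of_mul_eq_zero horthProj]
  refine prod_congr rfl fun i _ => ?_
  open scoped ComplexOrder in
  rw [det_one_sub_smul_of_isIdempotentElem
    (isIdempotentElem_mul_conjTranspose_of_tripotent (htri i))
    (by rw [rank_self_mul_conjTranspose, hrank i]), sub_sub_cancel]
end
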